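/- Let X_1, X_2, ... be i.i.d. with mean μ and E|X_1 - μ|^p ≤ v_p, p ∈ (1,2], and let φ and (λ_i) be as above. Then for any α ∈ (0,1), with probability at least 1 - α, for all n ≥ 1 simultaneously: -log(2/α) - C_p v_p Σ_{i=1}^n λ_i^p ≤ Σ_{i=1}^n φ(λ_i(X_i - μ)) ≤ log(2/α) + C_p v_p Σ_{i=1}^n λ_i^p. In particular the sets I_n(α) = {x : |Σφ(λ_i(X_i - x))| ≤ log(2/α) + C_p v_p Σλ_i^p} form a (1-α)-confidence sequence for μ. -/

import Mathlib

open MeasureTheory ProbabilityTheory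

noncomputable def catoniC (p : ℝ) : ℝ :=
  ((p - 1) / p) ^ (p / 2) * ((2 - p) / (p - 1)) ^ ((2 - p) / 2)

/-!
If `exp ψ(x) ≤ 1 + x + c |x|^p` and `Y` is centred with `E|Y|^p ≤ v`, then
`E exp ψ(λY) ≤ 1 + c v λ^p ≤ exp (c v λ^p)`, so for independent such `Y_i` the partial products of
`exp (ψ(λ_i Y_i) - c v λ_i^p)` form a nonnegative supermartingale of mean at most one, and Ville's
inequality bounds the probability that it ever reaches `2/α` by `α/2`. The two-sided bound on `φ`
makes both `ψ = φ` (with `Y_i = X_i - μ`) and `ψ(x) = -φ(-x)` (with `Y_i = μ - X_i`) admissible,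
and a union bound over the two tails gives the claim. Undoing the logarithms needs
`1 + x + C_p |x|^p > 0`, which holds because `C_p` exceeds the sharp constant `((p-1)/p)^(p-1)/p`
of `y ≤ 1 + c y^p`.
-/

open Real Finset

lemma catoniC_nonneg {p : ℝ} (hp1 : 1 ≤ p) (hp2 : p ≤ 2) : 0 ≤ catoniC p :=
  mul_nonneg (rpow_nonneg (div_nonneg (by linarith) (by linarith)) _)
    (rpow_nonneg (div_nonneg (by linarith) (by linarith)) _)

-- Bernoulli's inequality `1 + p (u - 1) ≤ u ^ p` at `u = (p - 1) / p * y`.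
lemma le_one_add_mul_rpow {p y : ℝ} (hp : 1 < p) (hy : 0 ≤ y) :
    y ≤ 1 + ((p - 1) / p) ^ (p - 1) / p * y ^ p := by
  have hp0 : 0 < p := by linarith
  have ha : 0 < (p - 1) / p := div_pos (by linarith) hp0
  have hu : 0 ≤ (p - 1) / p * y := mul_nonneg ha.le hy
  have hbern := one_add_mul_self_le_rpow_one_add (s := (p - 1) / p * y - 1) (by linarith) hp.le
  rw [add_sub_cancel, mul_rpow ha.le hy] at hbern
  have hpow : ((p - 1) / p) ^ p = (p - 1) / p * ((p - 1) / p) ^ (p - 1) := by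
    rw [← rpow_one_add' ha.le (by linarith), add_sub_cancel]
  rw [hpow] at hbern
  field_simp at hbern ⊢
  nlinarith

lemma sub_one_le_mul_log {x : ℝ} (hx : 0 < x) : x - 1 ≤ x * log x := by
  have := mul_le_mul_of_nonneg_left (one_sub_inv_le_log_of_pos hx) hx.le
  rwa [mul_sub, mul_one, mul_inv_cancel₀ hx.ne'] at this

lemma sub_one_lt_mul_log {x : ℝ} (hx : 0 < x) (hx1 : x ≠ 1) : x - 1 < x * log x := by
  have h := log_lt_sub_one_of_pos (inv_pos.2 hx) (inv_ne_one.2 hx1)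
  rw [log_inv] at h
  have := mul_lt_mul_of_pos_left (show 1 - x⁻¹ < log x by linarith) hx
  rwa [mul_sub, mul_one, mul_inv_cancel₀ hx.ne'] at this

lemma young_const_lt_catoniC {p : ℝ} (hp1 : 1 < p) (hp2 : p ≤ 2) :
    ((p - 1) / p) ^ (p - 1) / p < catoniC p := by
  rcases hp2.eq_or_lt with rfl | hp2
  · norm_num [catoniC]
  have hp0 : 0 < p := by linarith
  have hp1' : 0 < p - 1 := by linarith
  have hp2' : 0 < 2 - p := by linarith
  have ha : 0 < (p - 1) / p := div_pos hp1' hp0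
  have hb : 0 < (2 - p) / (p - 1) := div_pos hp2' hp1'
  rw [catoniC, ← log_lt_log_iff (div_pos (rpow_pos_of_pos ha _) hp0)
    (mul_pos (rpow_pos_of_pos ha _) (rpow_pos_of_pos hb _)),
    log_div (rpow_pos_of_pos ha _).ne' hp0.ne',
    log_mul (rpow_pos_of_pos ha _).ne' (rpow_pos_of_pos hb _).ne', log_rpow ha, log_rpow ha,
    log_rpow hb, log_div hp1'.ne' hp0.ne', log_div hp2'.ne' hp1'.ne']
  -- the difference of the two logarithms is `(p log p + (2 - p) log (2 - p)) / 2`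
  nlinarith [sub_one_lt_mul_log hp0 hp1.ne', sub_one_le_mul_log hp2']

lemma one_add_add_catoniC_mul_abs_rpow_pos {p : ℝ} (hp1 : 1 < p) (hp2 : p ≤ 2) (x : ℝ) :
    0 < 1 + x + catoniC p * |x| ^ p := by
  rcases (abs_nonneg x).eq_or_lt with h0 | h0
  · rw [abs_eq_zero.1 h0.symm, abs_zero, zero_rpow (by linarith)]
    norm_num
  · have hyoung := le_one_add_mul_rpow hp1 h0.le
    have hlt := mul_lt_mul_of_pos_right (young_const_lt_catoniC hp1 hp2) (rpow_pos_of_pos h0 p)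
    linarith [neg_abs_le x]

namespace MeasureTheory.Supermartingale

variable {Ω : Type*} {m : MeasurableSpace Ω} {μ : Measure Ω} [IsFiniteMeasure μ]
  {𝒢 : Filtration ℕ m} {F : ℕ → Ω → ℝ}

lemma integral_stoppedValue_le_integral_zero (hF : Supermartingale F 𝒢 μ) {τ : Ω → ℕ∞}
    (hτ : IsStoppingTime 𝒢 τ) {N : ℕ} (hτN : ∀ ω, τ ω ≤ N) :
    ∫ ω, stoppedValue F τ ω ∂μ ≤ ∫ ω, F 0 ω ∂μ := by
  have h := hF.neg.expected_stoppedValue_mono (isStoppingTime_const 𝒢 0) hτ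
    (fun _ => bot_le) hτN
  simpa [stoppedValue, integral_neg] using h

/-- Optional stopping at the first time `F` reaches `ε`, truncated at `N`. -/
lemma mul_measureReal_exists_le_le_integral_zero (hF : Supermartingale F 𝒢 μ) (hnn : 0 ≤ F)
    (ε : ℝ) (N : ℕ) :
    ε * μ.real {ω | ∃ k ≤ N, ε ≤ F k ω} ≤ ∫ ω, F 0 ω ∂μ := by
  set τ : Ω → ℕ∞ := fun ω => (hittingBtwn F (Set.Ici ε) 0 N ω : ℕ)
  have hτ : IsStoppingTime 𝒢 τ :=
    hF.stronglyAdapted.adapted.isStoppingTime_hittingBtwn measurableSet_Ici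
  have hτN : ∀ ω, τ ω ≤ N := fun ω => ENat.natCast_le_natCast.mpr (hittingBtwn_le ω)
  have hint : Integrable (stoppedValue F τ) μ := by
    have h : Integrable (-stoppedValue F τ) μ := hF.neg.integrable_stoppedValue hτ hτN
    simpa using h.neg
  have hmeas : MeasurableSet {ω | ∃ k ≤ N, ε ≤ F k ω} := by
    simp only [Set.ofPred_exists]
    exact .iUnion fun k => (MeasurableSet.const (k ≤ N)).inter <|
      measurableSet_le measurable_const ((hF.stronglyMeasurable k).measurable.mono (𝒢.le k) le_rfl)
  calc ε * μ.real {ω | ∃ k ≤ N, ε ≤ F k ω}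
      ≤ ∫ ω in {ω | ∃ k ≤ N, ε ≤ F k ω}, stoppedValue F τ ω ∂μ :=
        setIntegral_ge_of_const_le_real hmeas (measure_ne_top _ _)
          (fun ω ⟨k, hk, hFk⟩ => stoppedValue_hittingBtwn_mem ⟨k, ⟨Nat.zero_le _, hk⟩, hFk⟩)
          hint.integrableOn
    _ ≤ ∫ ω, stoppedValue F τ ω ∂μ :=
        setIntegral_le_integral hint (.of_forall fun ω => hnn _ ω)
    _ ≤ ∫ ω, F 0 ω ∂μ := hF.integral_stoppedValue_le_integral_zero hτ hτN

/-- **Ville's inequality**. -/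
theorem maximal_ineq (hF : Supermartingale F 𝒢 μ) (hnn : 0 ≤ F) {ε : ℝ} (hε : 0 < ε) :
    μ {ω | ∃ n, ε ≤ F n ω} ≤ ENNReal.ofReal ((∫ ω, F 0 ω ∂μ) / ε) := by
  have hunion : {ω | ∃ n, ε ≤ F n ω} = ⋃ N, {ω | ∃ k ≤ N, ε ≤ F k ω} := by
    ext ω
    simp only [Set.mem_ofPred_eq, Set.mem_iUnion]
    exact ⟨fun ⟨n, h⟩ => ⟨n, n, le_rfl, h⟩, fun ⟨_, k, _, h⟩ => ⟨k, h⟩⟩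
  have hmono : Monotone fun N => {ω | ∃ k ≤ N, ε ≤ F k ω} :=
    fun _ _ hNM _ ⟨k, hk, h⟩ => ⟨k, hk.trans hNM, h⟩
  rw [hunion, hmono.measure_iUnion]
  refine iSup_le fun N => ?_
  rw [ENNReal.le_ofReal_iff_toReal_le (measure_ne_top _ _)
      (div_nonneg (integral_nonneg (hnn 0)) hε.le), le_div_iff₀' hε]
  exact hF.mul_measureReal_exists_le_le_integral_zero hnn ε N

end MeasureTheory.Supermartingale

namespace ProbabilityTheory.iIndepFun

variable {Ω : Type*} {m : MeasurableSpace Ω} {P : Measure Ω} {g : ℕ → Ω → ℝ}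

lemma integrable_prod_range (hind : iIndepFun g P) (hgm : ∀ i, Measurable (g i))
    (hgi : ∀ i, Integrable (g i) P) (n : ℕ) :
    Integrable (∏ i ∈ range n, g i) P := by
  induction n with
  | zero =>
    have := hind.isProbabilityMeasure
    rw [range_zero, prod_empty]
    exact integrable_const 1
  | succ n ih =>
    rw [prod_range_succ]
    exact (hind.indepFun_prod_range_succ hgm n).integrable_mul ih (hgi n)

theorem supermartingale_prod_range_succ (hind : iIndepFun g P)
    (hgm : ∀ i, StronglyMeasurable (g i)) (hg0 : ∀ i, 0 ≤ g i) (hgi : ∀ i, Integrable (g i) P)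
    (hg1 : ∀ i, ∫ ω, g i ω ∂P ≤ 1) :
    Supermartingale (fun n => ∏ i ∈ range (n + 1), g i) (Filtration.natural g hgm) P := by
  have := hind.isProbabilityMeasure
  have hint := hind.integrable_prod_range (fun i => (hgm i).measurable) hgi
  have hadapted : StronglyAdapted (Filtration.natural g hgm) (fun n => ∏ i ∈ range (n + 1), g i) :=
    fun n => Finset.stronglyMeasurable_prod _ fun i hi =>
      Filtration.stronglyAdapted_natural hgm i |>.mono
        ((Filtration.natural g hgm).mono (Nat.lt_succ_iff.mp (mem_range.mp hi)))
  refine supermartingale_nat hadapted (fun n => hint (n + 1)) fun n => ?_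
  have hpull := condExp_mul_of_stronglyMeasurable_left (hadapted n)
    (by rw [← prod_range_succ]; exact hint (n + 2)) (hgi (n + 1))
  have hindep := hind.condExp_natural_ae_eq_of_lt hgm (Nat.lt_succ_self n)
  filter_upwards [hpull, hindep] with ω hω hω'
  rw [prod_range_succ, hω, Pi.mul_apply, hω', prod_apply]
  exact mul_le_of_le_one_right (prod_nonneg fun i _ => hg0 i ω) (hg1 (n + 1))

end ProbabilityTheory.iIndepFun

section CatoniBound

variable {Ω : Type*} {m : MeasurableSpace Ω} {P : Measure Ω} {p c : ℝ} {ψ : ℝ → ℝ}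

lemma exp_comp_mul_le (hψ : ∀ x, exp (ψ x) ≤ 1 + x + c * |x| ^ p) {l : ℝ} (hl : 0 ≤ l)
    (y : ℝ) : exp (ψ (l * y)) ≤ 1 + l * y + c * l ^ p * |y| ^ p := by
  have h := hψ (l * y)
  rwa [abs_mul, abs_of_nonneg hl, mul_rpow hl (abs_nonneg y), ← mul_assoc] at h

lemma integrable_of_integrable_abs_rpow [IsFiniteMeasure P] {Y : Ω → ℝ} (hp : 1 ≤ p)
    (hY : AEStronglyMeasurable Y P) (hYp : Integrable (fun ω => |Y ω| ^ p) P) : Integrable Y P := by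
  have h := integrable_norm_rpow_of_le hY zero_le_one (by linarith) hp
    (by simpa only [Real.norm_eq_abs] using hYp)
  simpa only [rpow_one, integrable_norm_iff hY] using h

lemma integrable_one_add_mul_add_mul_abs_rpow [IsFiniteMeasure P] {Y : Ω → ℝ}
    (hY : Integrable Y P) (hYp : Integrable (fun ω => |Y ω| ^ p) P) (a b : ℝ) :
    Integrable (fun ω => 1 + a * Y ω + b * |Y ω| ^ p) P :=
  ((integrable_const 1).add (hY.const_mul a)).add (hYp.const_mul b)

lemma integrable_exp_comp_mul [IsFiniteMeasure P] (hψm : Measurable ψ)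
    (hψ : ∀ x, exp (ψ x) ≤ 1 + x + c * |x| ^ p) {Y : Ω → ℝ} (hY : Integrable Y P)
    (hYp : Integrable (fun ω => |Y ω| ^ p) P) {l : ℝ} (hl : 0 ≤ l) :
    Integrable (fun ω => exp (ψ (l * Y ω))) P := by
  refine (integrable_one_add_mul_add_mul_abs_rpow hY hYp l (c * l ^ p)).mono'
    (hψm.comp_aemeasurable (hY.aemeasurable.const_mul l)).exp.aestronglyMeasurable
    (.of_forall fun ω => ?_)
  rw [norm_of_nonneg (exp_pos _).le]
  exact exp_comp_mul_le hψ hl (Y ω)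

lemma integral_exp_comp_mul_le [IsProbabilityMeasure P] (hψm : Measurable ψ)
    (hψ : ∀ x, exp (ψ x) ≤ 1 + x + c * |x| ^ p) (hc : 0 ≤ c) {Y : Ω → ℝ} (hY : Integrable Y P)
    (hY0 : ∫ ω, Y ω ∂P = 0) (hYp : Integrable (fun ω => |Y ω| ^ p) P) {v : ℝ}
    (hv : ∫ ω, |Y ω| ^ p ∂P ≤ v) {l : ℝ} (hl : 0 ≤ l) :
    ∫ ω, exp (ψ (l * Y ω)) ∂P ≤ exp (c * v * l ^ p) :=
  calc ∫ ω, exp (ψ (l * Y ω)) ∂P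
      ≤ ∫ ω, 1 + l * Y ω + c * l ^ p * |Y ω| ^ p ∂P :=
        integral_mono (integrable_exp_comp_mul hψm hψ hY hYp hl)
          (integrable_one_add_mul_add_mul_abs_rpow hY hYp _ _) fun ω => exp_comp_mul_le hψ hl (Y ω)
    _ = 1 + c * l ^ p * ∫ ω, |Y ω| ^ p ∂P := by
        have h1 : Integrable (fun ω => 1 + l * Y ω) P := (integrable_const 1).add (hY.const_mul l)
        rw [integral_add h1 (hYp.const_mul _),
          integral_add (integrable_const 1) (hY.const_mul l), integral_const_mul,
          integral_const_mul, hY0]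
        simp
    _ ≤ 1 + c * v * l ^ p := by
        nlinarith [mul_le_mul_of_nonneg_left hv (mul_nonneg hc (rpow_nonneg hl p))]
    _ ≤ exp (c * v * l ^ p) := by linarith [add_one_le_exp (c * v * l ^ p)]

theorem measure_exists_log_add_le_sum_le (hp : 1 ≤ p) (hψm : Measurable ψ)
    (hψ : ∀ x, exp (ψ x) ≤ 1 + x + c * |x| ^ p) (hc : 0 ≤ c) {X : ℕ → Ω → ℝ} {μ v : ℝ}
    (hXm : ∀ i, StronglyMeasurable (X i)) (hind : iIndepFun X P)
    (hmean : ∀ i, ∫ ω, X i ω ∂P = μ) (hmom_int : ∀ i, Integrable (fun ω => |X i ω - μ| ^ p) P)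
    (hmom : ∀ i, ∫ ω, |X i ω - μ| ^ p ∂P ≤ v) {l : ℕ → ℝ} (hl : ∀ i, 0 ≤ l i) {ε : ℝ}
    (hε : 0 < ε) :
    P {ω | ∃ n, log ε + c * v * ∑ i ∈ range (n + 1), l i ^ p ≤
        ∑ i ∈ range (n + 1), ψ (l i * (X i ω - μ))} ≤ ENNReal.ofReal (1 / ε) := by
  have := hind.isProbabilityMeasure
  set h : ℕ → ℝ → ℝ := fun i x => exp (ψ (l i * (x - μ)) - c * v * l i ^ p)
  have hh : ∀ i, Measurable (h i) := fun i => by fun_prop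
  set g : ℕ → Ω → ℝ := fun i ω => h i (X i ω)
  have hgm : ∀ i, StronglyMeasurable (g i) := fun i =>
    ((hh i).comp (hXm i).measurable).stronglyMeasurable
  have hY : ∀ i, Integrable (fun ω => X i ω - μ) P := fun i =>
    integrable_of_integrable_abs_rpow hp ((hXm i).sub stronglyMeasurable_const).aestronglyMeasurable
      (hmom_int i)
  have hY0 : ∀ i, ∫ ω, X i ω - μ ∂P = 0 := fun i => by
    have hX : Integrable (X i) P :=
      (integrable_add_const_iff (c := -μ)).1 (by simpa only [← sub_eq_add_neg] using hY i)
    rw [integral_sub hX (integrable_const μ), hmean i]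
    simp
  have hgi : ∀ i, Integrable (g i) P := fun i =>
    (integrable_exp_comp_mul hψm hψ (hY i) (hmom_int i) (hl i)).div_const
      (exp (c * v * l i ^ p)) |>.congr
      (.of_forall fun ω => by simp [g, h, exp_sub])
  have hg1 : ∀ i, ∫ ω, g i ω ∂P ≤ 1 := fun i => by
    have := integral_exp_comp_mul_le hψm hψ hc (hY i) (hY0 i) (hmom_int i) (hmom i) (hl i)
    simp only [g, h, exp_sub, integral_div]
    exact div_le_one_of_le₀ this (exp_pos _).le
  have hsuper := (hind.comp h hh).supermartingale_prod_range_succ hgm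
    (fun i ω => (exp_pos _).le) hgi hg1
  have hprod : ∀ n ω, ∏ i ∈ range (n + 1), g i ω = exp (∑ i ∈ range (n + 1),
      ψ (l i * (X i ω - μ)) - c * v * ∑ i ∈ range (n + 1), l i ^ p) := fun n ω => by
    rw [← exp_sum, sum_sub_distrib, mul_sum]
  calc _ = P {ω | ∃ n, ε ≤ (∏ i ∈ range (n + 1), g i) ω} := by
        congr! 3 with ω
        refine exists_congr fun n => ?_
        rw [prod_apply, hprod, ← log_le_iff_le_exp hε]
        constructor <;> intro <;> linarith
    _ ≤ ENNReal.ofReal ((∫ ω, (∏ i ∈ range (0 + 1), g i) ω ∂P) / ε) :=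
        hsuper.maximal_ineq (fun n ω => by simpa using prod_nonneg fun i _ => (exp_pos _).le) hε
    _ ≤ ENNReal.ofReal (1 / ε) := by
        gcongr
        simpa using hg1 0

theorem measure_exists_log_add_le_neg_sum_le (hp : 1 ≤ p) {φ : ℝ → ℝ} (hφm : Measurable φ)
    (hφ : ∀ x, exp (-φ (-x)) ≤ 1 + x + c * |x| ^ p) (hc : 0 ≤ c) {X : ℕ → Ω → ℝ} {μ v : ℝ}
    (hXm : ∀ i, StronglyMeasurable (X i)) (hind : iIndepFun X P)
    (hmean : ∀ i, ∫ ω, X i ω ∂P = μ) (hmom_int : ∀ i, Integrable (fun ω => |X i ω - μ| ^ p) P)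
    (hmom : ∀ i, ∫ ω, |X i ω - μ| ^ p ∂P ≤ v) {l : ℕ → ℝ} (hl : ∀ i, 0 ≤ l i) {ε : ℝ}
    (hε : 0 < ε) :
    P {ω | ∃ n, log ε + c * v * ∑ i ∈ range (n + 1), l i ^ p ≤
        -∑ i ∈ range (n + 1), φ (l i * (X i ω - μ))} ≤ ENNReal.ofReal (1 / ε) := by
  have h := measure_exists_log_add_le_sum_le (ψ := fun x => -φ (-x)) (X := fun i => -X i)
    (μ := -μ) hp (hφm.comp measurable_neg).neg hφ hc (fun i => (hXm i).neg)
    (hind.comp (fun _ => Neg.neg) fun _ => measurable_neg)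
    (fun i => by simp [integral_neg, hmean])
    (fun i => by simpa only [Pi.neg_apply, neg_sub_neg, abs_sub_comm μ] using hmom_int i)
    (fun i => by simpa only [Pi.neg_apply, neg_sub_neg, abs_sub_comm μ] using hmom i) hl hε
  simpa only [Pi.neg_apply, neg_sub_neg, ← mul_neg, neg_sub, sum_neg_distrib] using h

end CatoniBound

lemma ofReal_one_sub_add_le_measure_of_compl_subset_union {Ω : Type*} {m : MeasurableSpace Ω}
    {P : Measure Ω} [IsProbabilityMeasure P] {s t u : Set Ω} {a b : ℝ} (hcover : sᶜ ⊆ t ∪ u)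
    (ht : P t ≤ ENNReal.ofReal a) (hu : P u ≤ ENNReal.ofReal b) (ha : 0 ≤ a) (hb : 0 ≤ b) :
    ENNReal.ofReal (1 - (a + b)) ≤ P s := by
  rw [ENNReal.ofReal_sub _ (add_nonneg ha hb), ENNReal.ofReal_one, ENNReal.ofReal_add ha hb,
    tsub_le_iff_right, ← measure_univ (μ := P), ← Set.union_compl_self s]
  calc P (s ∪ sᶜ) ≤ P s + P (t ∪ u) := (measure_union_le _ _).trans (by gcongr)
    _ ≤ P s + (ENNReal.ofReal a + ENNReal.ofReal b) := by
        gcongr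
        exact (measure_union_le _ _).trans (add_le_add ht hu)

theorem catoni_confidence_sequence_general {Ω : Type*} {m : MeasurableSpace Ω} (P : Measure Ω)
    [IsProbabilityMeasure P]
    (p v_p μ α : ℝ) (hp : p ∈ Set.Ioc (1 : ℝ) 2) (hα : α ∈ Set.Ioo (0 : ℝ) 1)
    (φ : ℝ → ℝ) (hφ : Monotone φ)
    (hφ_bound : ∀ x : ℝ,
      -Real.log (1 - x + catoniC p * |x| ^ p) ≤ φ x ∧
        φ x ≤ Real.log (1 + x + catoniC p * |x| ^ p))
    (X : ℕ → Ω → ℝ) (hXmeas : ∀ i, StronglyMeasurable (X i))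
    (hindep : ProbabilityTheory.iIndepFun X P)
    (hmean : ∀ i, ∫ ω, X i ω ∂P = μ)
    (hmom_int : ∀ i, Integrable (fun ω => |X i ω - μ| ^ p) P)
    (hmom : ∀ i, ∫ ω, |X i ω - μ| ^ p ∂P ≤ v_p)
    (l : ℕ → ℝ) (hl : ∀ i, 0 < l i) :
    ENNReal.ofReal (1 - α) ≤
      P {ω | ∀ n : ℕ, 1 ≤ n →
        -Real.log (2 / α) - catoniC p * v_p * ∑ i ∈ Finset.range n, l i ^ p ≤
            (∑ i ∈ Finset.range n, φ (l i * (X i ω - μ))) ∧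
          (∑ i ∈ Finset.range n, φ (l i * (X i ω - μ))) ≤
            Real.log (2 / α) + catoniC p * v_p * ∑ i ∈ Finset.range n, l i ^ p} ∧
    ENNReal.ofReal (1 - α) ≤
      P {ω | ∀ n : ℕ, 1 ≤ n → μ ∈ {x : ℝ |
        |∑ i ∈ Finset.range n, φ (l i * (X i ω - x))| ≤
          Real.log (2 / α) + catoniC p * v_p * ∑ i ∈ Finset.range n, l i ^ p}} := by
  obtain ⟨hp1, hp2⟩ := hp
  have hα0 : 0 < 2 / α := div_pos two_pos hα.1
  have hpos := one_add_add_catoniC_mul_abs_rpow_pos hp1 hp2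
  have hupper := measure_exists_log_add_le_sum_le hp1.le hφ.measurable
    (fun x => (le_log_iff_exp_le (hpos x)).1 (hφ_bound x).2) (catoniC_nonneg hp1.le hp2)
    hXmeas hindep hmean hmom_int hmom (fun i => (hl i).le) hα0
  have hlower := measure_exists_log_add_le_neg_sum_le hp1.le hφ.measurable
    (fun x => (le_log_iff_exp_le (hpos x)).1 (by
      simpa [abs_neg, sub_neg_eq_add, neg_le] using (hφ_bound (-x)).1))
    (catoniC_nonneg hp1.le hp2) hXmeas hindep hmean hmom_int hmom (fun i => (hl i).le) hα0
  refine (fun hgood => ⟨hgood, hgood.trans (measure_mono fun ω hω n hn => ?_)⟩) ?_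
  · rw [show 1 - α = 1 - (1 / (2 / α) + 1 / (2 / α)) by field_simp; ring]
    refine ofReal_one_sub_add_le_measure_of_compl_subset_union (fun ω hω => ?_) hupper hlower
      (by positivity) (by positivity)
    simp only [Set.mem_compl_iff, Set.mem_ofPred_eq, not_forall, not_and_or, not_le] at hω
    obtain ⟨n, hn, hfail | hfail⟩ := hω
    all_goals obtain ⟨k, rfl⟩ := Nat.exists_eq_add_of_le' hn
    · exact Or.inr ⟨k, by linarith⟩
    · exact Or.inl ⟨k, hfail.le⟩
  · obtain ⟨hlow, hupp⟩ := hω n hn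
    exact abs_le.2 ⟨by linarith, hupp⟩

theorem catoni_confidence_sequence {Ω : Type*} {m : MeasurableSpace Ω} (P : Measure Ω)
    [IsProbabilityMeasure P]
    (p v_p μ α : ℝ) (hp : p ∈ Set.Ioc (1 : ℝ) 2) (hα : α ∈ Set.Ioo (0 : ℝ) 1)
    (φ : ℝ → ℝ) (hφ : Monotone φ)
    (hφ_bound : ∀ x : ℝ,
      -Real.log (1 - x + catoniC p * |x| ^ p) ≤ φ x ∧
        φ x ≤ Real.log (1 + x + catoniC p * |x| ^ p))
    (X : ℕ → Ω → ℝ) (hXmeas : ∀ i, StronglyMeasurable (X i))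
    (hindep : ProbabilityTheory.iIndepFun X P)
    (hident : ∀ i, ProbabilityTheory.IdentDistrib (X i) (X 0) P P)
    (hmean : ∀ i, ∫ ω, X i ω ∂P = μ)
    (hmom_int : ∀ i, Integrable (fun ω => |X i ω - μ| ^ p) P)
    (hmom : ∀ i, ∫ ω, |X i ω - μ| ^ p ∂P ≤ v_p)
    (l : ℕ → ℝ) (hl : ∀ i, 0 < l i) :
    ENNReal.ofReal (1 - α) ≤
      P {ω | ∀ n : ℕ, 1 ≤ n →
        -Real.log (2 / α) - catoniC p * v_p * ∑ i ∈ Finset.range n, l i ^ p ≤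
            (∑ i ∈ Finset.range n, φ (l i * (X i ω - μ))) ∧
          (∑ i ∈ Finset.range n, φ (l i * (X i ω - μ))) ≤
            Real.log (2 / α) + catoniC p * v_p * ∑ i ∈ Finset.range n, l i ^ p} ∧
    ENNReal.ofReal (1 - α) ≤
      P {ω | ∀ n : ℕ, 1 ≤ n → μ ∈ {x : ℝ |
        |∑ i ∈ Finset.range n, φ (l i * (X i ω - x))| ≤
          Real.log (2 / α) + catoniC p * v_p * ∑ i ∈ Finset.range n, l i ^ p}} :=
  catoni_confidence_sequence_general (m := m) P p v_p μ α hp hα φ hφ hφ_bound X hXmeas hindep hmean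
    hmom_int hmom l hl
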